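/- arXiv:1702.04737 — 2 statements merged into one kernel-verified Lean document; each statement's English description precedes it below -/
import Mathlib

section
/- Given Petz data (V, X, Y, V_N, M, K, X_P, Y_P), one has the factorization identity Y_P + iΩ_n − i X_P Ω_m X_Pᵀ = M V [ (V − iΩ_n)^{-1} − Xᵀ (V_N − iΩ_m)^{-1} X ] V Mᵀ, as an identity of complex 2n×2n matrices. -/
noncomputable section
open Matrix
open scoped ComplexOrder

/-- The standard `2n × 2n` symplectic form matrix `Ω = [[0, I], [-I, 0]]`. -/
def Om (n : ℕ) : Matrix (Fin n ⊕ Fin n) (Fin n ⊕ Fin n) ℝ :=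
  Matrix.fromBlocks 0 1 (-1) 0

/-- Complexification of a real matrix. -/
def cm {k l : Type*} (A : Matrix k l ℝ) : Matrix k l ℂ := A.map Complex.ofReal

/-!
Everything is complexified. `M` and `K` are square roots of `1 + S⁻²` (with `S = VΩ_n`, resp.
`S = Ω_m V_N`) whose spectra lie in the open right half-plane. Such a root is unique: if
`P² = Q²`, then `P - Q` intertwines `P` and `-Q`, whose spectra are disjoint, so `P - Q = 0`
(Sylvester). Since `V Mᵀ V⁻¹` is another such root for `S = VΩ_n`, this gives `M V = V Mᵀ`, and
likewise `Kᵀ V_N = V_N K`.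

For `S = W J` with `J² = -1` and `R = S⁻¹` one has `W ∓ iJ = (1 ± iR) W` and
`L² = (1 - iR)(1 + iR)`, hence `L W (W - iJ)⁻¹ L W = W + iJ`. For `(W, L) = (V, M)` this is
`V + iΩ_n = M V (V - iΩ_n)⁻¹ V Mᵀ`; for `(W, L) = (V_N, Kᵀ)` it turns `X_P (V_N + iΩ_m) X_Pᵀ` into
`M V Xᵀ (V_N - iΩ_m)⁻¹ X V Mᵀ`. The difference of the two is the claimed identity. The positivity
conditions (with the rank of `X`) make `V` and `V_N` invertible.
-/

open Polynomial Complex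

section Complexification

variable {k l o : Type*}

theorem cm_mul [Fintype l] (A : Matrix k l ℝ) (B : Matrix l o ℝ) : cm (A * B) = cm A * cm B :=
  Matrix.map_mul (f := Complex.ofRealHom)

theorem cm_add (A B : Matrix k l ℝ) : cm (A + B) = cm A + cm B := Matrix.map_add _ (by simp) _ _

theorem cm_sub (A B : Matrix k l ℝ) : cm (A - B) = cm A - cm B := Matrix.map_sub _ (by simp) _ _

theorem cm_transpose (A : Matrix k l ℝ) : cm Aᵀ = (cm A)ᵀ := Matrix.transpose_map

theorem conjTranspose_cm (A : Matrix k l ℝ) : (cm A)ᴴ = (cm A)ᵀ := by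
  ext; simp [cm]

theorem cm_one [DecidableEq k] : cm (1 : Matrix k k ℝ) = 1 := Matrix.map_one _ (by simp) (by simp)

variable [Fintype k] [DecidableEq k]

theorem cm_pow (A : Matrix k k ℝ) (p : ℕ) : cm (A ^ p) = cm A ^ p :=
  map_pow Complex.ofRealHom.mapMatrix A p

theorem det_cm (A : Matrix k k ℝ) : (cm A).det = A.det := (RingHom.map_det Complex.ofRealHom A).symm

theorem cm_inv (A : Matrix k k ℝ) : cm A⁻¹ = (cm A)⁻¹ := by
  by_cases hA : IsUnit A.det
  · exact (inv_eq_left_inv (by rw [← cm_mul, nonsing_inv_mul _ hA, cm_one])).symm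
  · have hcA : ¬IsUnit (cm A).det := by simpa [det_cm] using hA
    rw [nonsing_inv_apply_not_isUnit _ hA, nonsing_inv_apply_not_isUnit _ hcA]
    ext; simp [cm]

end Complexification

theorem cm_Om (n : ℕ) : cm (Om n) = -J (Fin n) ℂ := by
  ext (i | i) (j | j) <;> simp [cm, Om, J, Matrix.one_apply, apply_ite]

theorem cm_Om_mul_self (n : ℕ) : cm (Om n) * cm (Om n) = -1 := by
  rw [cm_Om, neg_mul_neg, J_squared]

theorem transpose_cm_Om (n : ℕ) : (cm (Om n))ᵀ = -cm (Om n) := by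
  rw [cm_Om, transpose_neg, J_transpose]

theorem Polynomial.aeval_mul_eq_mul_aeval {R A : Type*} [CommSemiring R] [Semiring A]
    [Algebra R A] {P Q Z : A} (h : P * Z = Z * Q) (f : R[X]) :
    aeval P f * Z = Z * aeval Q f := by
  induction f using Polynomial.induction_on' with
  | add p q hp hq => rw [map_add, map_add, add_mul, mul_add, hp, hq]
  | monomial p a =>
    have hpow : P ^ p * Z = Z * Q ^ p := (SemiconjBy.pow_right h.symm p).symm
    rw [aeval_monomial, aeval_monomial, mul_assoc, hpow, ← mul_assoc, Algebra.commutes,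
      mul_assoc]

namespace Matrix

variable {ι κ : Type*} [Fintype ι] [DecidableEq ι] [Fintype κ] [DecidableEq κ]

theorem eq_zero_of_mul_eq_mul_of_disjoint_spectrum {K : Type*} [Field K] [IsAlgClosed K]
    {P Q Z : Matrix ι ι K} (h : P * Z = Z * Q) (hPQ : Disjoint (spectrum K P) (spectrum K Q)) :
    Z = 0 := by
  cases isEmpty_or_nonempty ι
  · exact Subsingleton.elim _ _
  have hunit : IsUnit (aeval Q P.charpoly) := by
    rw [← spectrum.zero_notMem_iff K, spectrum.map_polynomial_aeval_of_degree_pos _ _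
      (by rw [charpoly_degree_eq_dim]; exact_mod_cast Fintype.card_pos)]
    rintro ⟨μ, hμQ, hμP⟩
    exact hPQ.notMem_of_mem_right hμQ (mem_spectrum_iff_isRoot_charpoly.mpr hμP)
  have hZ : Z * aeval Q P.charpoly = 0 := by
    rw [← aeval_mul_eq_mul_aeval h, aeval_self_charpoly, zero_mul]
  exact hunit.mul_left_eq_zero.mp hZ

theorem eq_of_sq_eq_of_re_pos {P Q : Matrix ι ι ℂ} (hPQ : P ^ 2 = Q ^ 2)
    (hP : ∀ μ ∈ spectrum ℂ P, 0 < μ.re) (hQ : ∀ μ ∈ spectrum ℂ Q, 0 < μ.re) : P = Q := by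
  have hsylv : P * (P - Q) = (P - Q) * -Q := by
    rw [mul_sub, ← sq, hPQ, sq]; noncomm_ring
  refine sub_eq_zero.mp (eq_zero_of_mul_eq_mul_of_disjoint_spectrum hsylv ?_)
  rw [← spectrum.neg_eq, Set.disjoint_left]
  intro μ hμP hμQ
  have hμQ' := hQ (-μ) hμQ
  rw [neg_re] at hμQ'
  linarith [hP μ hμP]

theorem inv_neg {R : Type*} [CommRing R] (A : Matrix ι ι R) : (-A)⁻¹ = -A⁻¹ := by
  by_cases hA : IsUnit A.det
  · exact inv_eq_right_inv (by rw [neg_mul_neg, mul_nonsing_inv _ hA])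
  · have hnA : ¬IsUnit (-A).det := by
      rwa [det_neg, IsUnit.mul_iff, and_iff_right (isUnit_neg_one.pow _)]
    rw [nonsing_inv_apply_not_isUnit _ hA, nonsing_inv_apply_not_isUnit _ hnA, neg_zero]

theorem inv_conj {R : Type*} [CommRing R] {U : Matrix ι ι R} (hU : IsUnit U)
    (A : Matrix ι ι R) : (U * A * U⁻¹)⁻¹ = U * A⁻¹ * U⁻¹ := by
  rw [mul_inv_rev, mul_inv_rev, nonsing_inv_nonsing_inv _ ((isUnit_iff_isUnit_det U).mp hU),
    mul_assoc]

theorem _root_.Commute.nonsing_inv_right {R : Type*} [CommRing R] {A B : Matrix ι ι R}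
    (h : Commute A B) (hB : IsUnit B) : Commute A B⁻¹ := by
  obtain ⟨u, rfl⟩ := hB
  rw [← coe_units_inv]
  exact h.units_inv_right

theorem spectrum_transpose {K : Type*} [Field K] (A : Matrix ι ι K) :
    spectrum K Aᵀ = spectrum K A := by
  ext μ
  rw [mem_spectrum_iff_isRoot_charpoly, mem_spectrum_iff_isRoot_charpoly, charpoly_transpose]

theorem isUnit_of_rank_eq_card {K : Type*} [Field K] {A : Matrix κ κ K}
    (h : A.rank = Fintype.card κ) : IsUnit A := by
  rw [← mulVec_surjective_iff_isUnit]
  have htop : LinearMap.range A.mulVecLin = ⊤ :=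
    Submodule.eq_top_of_finrank_eq (by rw [← Matrix.rank, h, Module.finrank_fintype_fun_eq_card])
  exact fun y => LinearMap.range_eq_top.mp htop y

end Matrix

variable {ι κ : Type*} [Fintype ι] [DecidableEq ι] [Fintype κ] [DecidableEq κ]

/-- `L = √(1 + S⁻²)`, the square root with spectrum in the open right half-plane that commutes
with `S`. The Petz matrices are `M = √(1 + (VΩ_n)⁻²)` and `K = √(1 + (Ω_m V_N)⁻²)`. -/
structure IsPetzRoot (L S : Matrix ι ι ℂ) : Prop where
  sq_eq : L ^ 2 = 1 + S⁻¹ ^ 2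
  commute : Commute L S
  re_pos : ∀ μ ∈ spectrum ℂ L, 0 < μ.re

namespace IsPetzRoot

variable {L L' S : Matrix ι ι ℂ}

theorem isUnit (h : IsPetzRoot L S) : IsUnit L :=
  spectrum.isUnit_of_zero_notMem ℂ fun h0 => (h.re_pos 0 h0).false

theorem unique (h : IsPetzRoot L S) (h' : IsPetzRoot L' S) : L = L' :=
  eq_of_sq_eq_of_re_pos (h.sq_eq.trans h'.sq_eq.symm) h.re_pos h'.re_pos

theorem transpose (h : IsPetzRoot L S) : IsPetzRoot Lᵀ Sᵀ where
  sq_eq := by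
    rw [← transpose_pow, h.sq_eq, transpose_add, transpose_one, transpose_pow,
      transpose_nonsing_inv]
  commute := by rw [commute_iff_eq, ← transpose_mul, ← transpose_mul, h.commute.eq]
  re_pos := by rw [spectrum_transpose]; exact h.re_pos

theorem neg (h : IsPetzRoot L S) : IsPetzRoot L (-S) where
  sq_eq := by rw [h.sq_eq, Matrix.inv_neg, neg_sq]
  commute := h.commute.neg_right
  re_pos := h.re_pos

theorem conj (h : IsPetzRoot L S) {U : Matrix ι ι ℂ} (hU : IsUnit U) :
    IsPetzRoot (U * L * U⁻¹) (U * S * U⁻¹) := by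
  have hinv := inv_conj hU S
  obtain ⟨u, rfl⟩ := hU
  simp only [← coe_units_inv] at hinv ⊢
  refine ⟨?_, ?_, ?_⟩
  · rw [hinv, Units.conj_pow, h.sq_eq, Units.conj_pow, mul_add, add_mul, mul_one, Units.mul_inv]
  · rw [commute_iff_eq]
    simp only [mul_assoc, Units.inv_mul_cancel_left]
    rw [← mul_assoc L, h.commute.eq, mul_assoc]
  · rw [spectrum.units_conjugate]; exact h.re_pos

theorem mul_transpose_mul_inv_eq (h : IsPetzRoot L S) {U : Matrix ι ι ℂ} (hU : IsUnit U)
    (hS : U * Sᵀ * U⁻¹ = -S) : U * Lᵀ * U⁻¹ = L := by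
  have h' := (h.transpose.conj hU).neg
  rw [hS, neg_neg] at h'
  exact h'.unique h

theorem mul_transpose_eq_mul {W J : Matrix ι ι ℂ} (h : IsPetzRoot L (W * J)) (hW : Wᵀ = W)
    (hJ : Jᵀ = -J) (hWu : IsUnit W) : W * Lᵀ = L * W := by
  have hWdet := (isUnit_iff_isUnit_det W).mp hWu
  have hconj := h.mul_transpose_mul_inv_eq hWu (by
    rw [transpose_mul, hJ, hW, neg_mul, mul_neg, neg_mul, ← mul_assoc,
      mul_nonsing_inv_cancel_right _ _ hWdet])
  conv_rhs => rw [← hconj, nonsing_inv_mul_cancel_right _ _ hWdet]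

theorem transpose_mul_eq_mul {W J : Matrix ι ι ℂ} (h : IsPetzRoot L (J * W)) (hW : Wᵀ = W)
    (hJ : Jᵀ = -J) (hWu : IsUnit W) : Lᵀ * W = W * L := by
  have hWdet := (isUnit_iff_isUnit_det W).mp hWu
  have hconj := h.mul_transpose_mul_inv_eq (isUnit_nonsing_inv_iff.mpr hWu) (by
    rw [nonsing_inv_nonsing_inv _ hWdet, transpose_mul, hJ, hW, mul_neg, mul_neg, neg_mul,
      nonsing_inv_mul_cancel_left _ _ hWdet])
  conv_rhs => rw [← hconj, nonsing_inv_nonsing_inv _ hWdet, mul_assoc,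
    mul_nonsing_inv_cancel_left _ _ hWdet]

theorem mul_mul_inv_sub_mul_mul {W J : Matrix ι ι ℂ} (hJ : J * J = -1) (hW : IsUnit W)
    (h : IsPetzRoot L (W * J)) : L * W * (W - I • J)⁻¹ * (L * W) = W + I • J := by
  have hJu : IsUnit J :=
    (isUnit_iff_isUnit_det J).mpr (isUnit_det_of_right_inverse (by rw [mul_neg, hJ, neg_neg]))
  have hRW : (W * J)⁻¹ * W = -J := by
    rw [Matrix.mul_inv_rev, mul_assoc, nonsing_inv_mul _ ((isUnit_iff_isUnit_det W).mp hW),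
      mul_one, inv_eq_left_inv (by rw [neg_mul, hJ, neg_neg] : -J * J = 1)]
  have hLR : Commute L (W * J)⁻¹ := h.commute.nonsing_inv_right (hW.mul hJu)
  have hsq := h.sq_eq
  set R := (W * J)⁻¹
  have hsub : W - I • J = (1 + I • R) * W := by
    rw [add_mul, one_mul, smul_mul_assoc, hRW, smul_neg, sub_eq_add_neg]
  have hadd : W + I • J = (1 - I • R) * W := by
    rw [sub_mul, one_mul, smul_mul_assoc, hRW, smul_neg, sub_neg_eq_add]
  have hL2 : L * L = (1 - I • R) * (1 + I • R) := by
    rw [← pow_two, hsq, pow_two]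
    simp only [sub_mul, mul_add, one_mul, mul_one, smul_mul_smul_comm, I_mul_I, neg_one_smul]
    abel
  have hcomm : Commute L (1 + I • R) := (Commute.one_right L).add_right (hLR.smul_right I)
  have hunit : IsUnit (1 + I • R) := by
    have hLL := h.isUnit.mul h.isUnit
    rw [hL2, Commute.isUnit_mul_iff ((Commute.one_left _).sub_left
      ((Commute.one_right _).add_right (Commute.refl _)))] at hLL
    exact hLL.2
  calc L * W * (W - I • J)⁻¹ * (L * W) = L * (1 + I • R)⁻¹ * L * W := by
        rw [hsub, Matrix.mul_inv_rev]
        simp only [mul_assoc]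
        rw [mul_nonsing_inv_cancel_left _ _ ((isUnit_iff_isUnit_det W).mp hW)]
    _ = L * L * (1 + I • R)⁻¹ * W := by
        rw [mul_assoc L _ L, ← (hcomm.nonsing_inv_right hunit).eq, mul_assoc L L]
    _ = W + I • J := by
        rw [hL2, mul_assoc _ (1 + I • R), mul_nonsing_inv _ ((isUnit_iff_isUnit_det _).mp hunit),
          mul_one, hadd]

end IsPetzRoot

theorem isPetzRoot_cm {L S : Matrix ι ι ℝ} (hsq : L * L = 1 + S⁻¹ ^ 2) (hcomm : L * S = S * L)
    (heig : ∀ μ : ℂ, (cm L).charpoly.IsRoot μ → μ.im = 0 ∧ 0 < μ.re) :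
    IsPetzRoot (cm L) (cm S) where
  sq_eq := by rw [← cm_pow, pow_two, hsq, cm_add, cm_one, cm_pow, cm_inv]
  commute := by rw [commute_iff_eq, ← cm_mul, hcomm, cm_mul]
  re_pos μ hμ := (heig μ (mem_spectrum_iff_isRoot_charpoly.mp hμ)).2

theorem isUnit_of_posDef_add_I_smul {V J : Matrix ι ι ℂ} (hV : Vᵀ = V) (hJ : Jᵀ = -J)
    (h : (V + I • J).PosDef) : IsUnit V := by
  have h2V : (V + I • J) + (V + I • J)ᵀ = (2 : ℂ) • V := by
    rw [transpose_add, transpose_smul, hV, hJ, two_smul, smul_neg]; abel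
  have hdet := (isUnit_iff_isUnit_det _).mp (h2V ▸ (h.add h.transpose).isUnit)
  rw [det_smul] at hdet
  exact (isUnit_iff_isUnit_det V).mpr (isUnit_of_mul_isUnit_right hdet)

omit [DecidableEq ι] in
theorem injective_vecMul_cm_of_rank_eq_card {X : Matrix κ ι ℝ} (h : X.rank = Fintype.card κ) :
    Function.Injective (cm X).vecMul := by
  have hXX : IsUnit (cm X * (cm X)ᵀ) := by
    rw [← cm_transpose, ← cm_mul, isUnit_iff_isUnit_det, det_cm, isUnit_iff_ne_zero,
      Complex.ofReal_ne_zero, ← isUnit_iff_ne_zero, ← isUnit_iff_isUnit_det]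
    exact isUnit_of_rank_eq_card (by rw [rank_self_mul_transpose, h])
  refine Function.Injective.of_comp (f := (cm X)ᵀ.vecMul) ?_
  convert vecMul_injective_iff_isUnit.mpr hXX using 1
  ext v : 1
  exact vecMul_vecMul _ _ _

omit [DecidableEq ι] [DecidableEq κ] in
theorem posDef_mul_mul_conjTranspose_add {V J : Matrix ι ι ℂ} {Y j : Matrix κ κ ℂ}
    {X : Matrix κ ι ℂ} (h : (V + I • J).PosDef) (hX : Function.Injective X.vecMul)
    (hY : (Y + I • j - I • (X * J * Xᴴ)).PosSemidef) : (X * V * Xᴴ + Y + I • j).PosDef := by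
  have hsplit :
      X * V * Xᴴ + Y + I • j = X * (V + I • J) * Xᴴ + (Y + I • j - I • (X * J * Xᴴ)) := by
    rw [Matrix.mul_add, Matrix.add_mul, Matrix.mul_smul, Matrix.smul_mul]; abel
  rw [hsplit]
  exact (h.mul_mul_conjTranspose_same hX).add_posSemidef hY

theorem petz_factorization {J : Matrix ι ι ℂ} {j : Matrix κ κ ℂ} (hJ : J * J = -1)
    (hJt : Jᵀ = -J) (hj : j * j = -1) (hjt : jᵀ = -j) {V M : Matrix ι ι ℂ} {VN K : Matrix κ κ ℂ}
    {X : Matrix κ ι ℂ} {XP : Matrix ι κ ℂ} (hV : Vᵀ = V) (hVu : IsUnit V) (hVN : VNᵀ = VN)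
    (hVNu : IsUnit VN) (hM : IsPetzRoot M (V * J)) (hK : IsPetzRoot K (j * VN))
    (hXP : XP = M * V * Xᵀ * K⁻¹ * VN⁻¹) :
    V - XP * VN * XPᵀ + I • J - I • (XP * j * XPᵀ)
      = M * V * ((V - I • J)⁻¹ - Xᵀ * (VN - I • j)⁻¹ * X) * V * Mᵀ := by
  have hVNdet := (isUnit_iff_isUnit_det VN).mp hVNu
  have hMV := hM.mul_transpose_eq_mul hV hJt hVu
  have hKVN := hK.transpose_mul_eq_mul hVN hjt hVNu
  have hKt : IsPetzRoot Kᵀ (VN * j) := by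
    simpa [transpose_mul, hjt, hVN] using hK.transpose.neg
  have hV_fac : V + I • J = M * V * (V - I • J)⁻¹ * V * Mᵀ := by
    rw [mul_assoc _ V, hMV, ← hM.mul_mul_inv_sub_mul_mul hJ hVu]
  have hVN_fac : VN + I • j = VN * K * (VN - I • j)⁻¹ * (Kᵀ * VN) := by
    rw [← hKt.mul_mul_inv_sub_mul_mul hj hVNu, hKVN]
  have hKdet := (isUnit_iff_isUnit_det K).mp hK.isUnit
  have hXPl : XP * (VN * K) = M * V * Xᵀ := by
    rw [hXP]
    simp only [Matrix.mul_assoc]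
    rw [nonsing_inv_mul_cancel_left _ _ hVNdet, nonsing_inv_mul _ hKdet, Matrix.mul_one]
  have hXPr : Kᵀ * VN * XPᵀ = X * V * Mᵀ := by
    rw [hXP]
    simp only [transpose_mul, transpose_nonsing_inv, hVN, hV, transpose_transpose,
      Matrix.mul_assoc]
    rw [mul_nonsing_inv_cancel_left _ _ hVNdet,
      mul_nonsing_inv_cancel_left _ _ (by rwa [det_transpose])]
  calc V - XP * VN * XPᵀ + I • J - I • (XP * j * XPᵀ)
      = (V + I • J) - XP * (VN + I • j) * XPᵀ := by
        rw [Matrix.mul_add, Matrix.add_mul, Matrix.mul_smul, Matrix.smul_mul]; abel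
    _ = M * V * (V - I • J)⁻¹ * V * Mᵀ - M * V * Xᵀ * (VN - I • j)⁻¹ * (X * V * Mᵀ) := by
        rw [hV_fac, hVN_fac, ← hXPl, ← hXPr]; simp only [Matrix.mul_assoc]
    _ = M * V * ((V - I • J)⁻¹ - Xᵀ * (VN - I • j)⁻¹ * X) * V * Mᵀ := by
        simp only [Matrix.mul_sub, Matrix.sub_mul, Matrix.mul_assoc]

theorem petz_cp_factorization_general (n m : ℕ)
    (V M : Matrix (Fin n ⊕ Fin n) (Fin n ⊕ Fin n) ℝ)
    (X : Matrix (Fin m ⊕ Fin m) (Fin n ⊕ Fin n) ℝ)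
    (Y VN K : Matrix (Fin m ⊕ Fin m) (Fin m ⊕ Fin m) ℝ)
    (XP : Matrix (Fin n ⊕ Fin n) (Fin m ⊕ Fin m) ℝ)
    (YP : Matrix (Fin n ⊕ Fin n) (Fin n ⊕ Fin n) ℝ)
    (hV : V.IsSymm)
    (hVpd : (cm V + Complex.I • cm (Om n)).PosDef)
    (hXrank : X.rank = 2 * m)
    (hY : Y.IsSymm)
    (hYcp : (cm Y + Complex.I • cm (Om m)
        - Complex.I • (cm X * cm (Om n) * (cm X)ᵀ)).PosSemidef)
    (hVN : VN = X * V * Xᵀ + Y)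
    (hM2 : M * M = 1 + ((V * Om n)⁻¹) ^ 2)
    (hMcomm : M * (V * Om n) = (V * Om n) * M)
    (hMeig : ∀ μ : ℂ, (cm M).charpoly.IsRoot μ → μ.im = 0 ∧ 0 < μ.re)
    (hK2 : K * K = 1 + ((Om m * VN)⁻¹) ^ 2)
    (hKcomm : K * (Om m * VN) = (Om m * VN) * K)
    (hKeig : ∀ μ : ℂ, (cm K).charpoly.IsRoot μ → μ.im = 0 ∧ 0 < μ.re)
    (hXP : XP = M * V * Xᵀ * K⁻¹ * VN⁻¹)
    (hYP : YP = V - XP * VN * XPᵀ) :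
    cm YP + Complex.I • cm (Om n) - Complex.I • (cm XP * cm (Om m) * (cm XP)ᵀ)
      = cm M * cm V
          * ((cm V - Complex.I • cm (Om n))⁻¹
              - (cm X)ᵀ * (cm VN - Complex.I • cm (Om m))⁻¹ * cm X)
          * cm V * (cm M)ᵀ := by
  have hVsymm : (cm V)ᵀ = cm V := by rw [← cm_transpose, hV.eq]
  have hVNsymm : (cm VN)ᵀ = cm VN := by
    rw [← cm_transpose, hVN, transpose_add, transpose_mul, transpose_mul, transpose_transpose,
      hV.eq, hY.eq, Matrix.mul_assoc]
  have hVNpd : (cm VN + I • cm (Om m)).PosDef := by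
    have hX := injective_vecMul_cm_of_rank_eq_card (X := X) (by simpa [two_mul] using hXrank)
    rw [← conjTranspose_cm] at hYcp
    simpa only [conjTranspose_cm, ← cm_transpose, ← cm_mul, ← cm_add, ← hVN]
      using posDef_mul_mul_conjTranspose_add hVpd hX hYcp
  have hVu := isUnit_of_posDef_add_I_smul hVsymm (transpose_cm_Om n) hVpd
  have hVNu := isUnit_of_posDef_add_I_smul hVNsymm (transpose_cm_Om m) hVNpd
  have hMroot : IsPetzRoot (cm M) (cm V * cm (Om n)) :=
    cm_mul V (Om n) ▸ isPetzRoot_cm hM2 hMcomm hMeig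
  have hKroot : IsPetzRoot (cm K) (cm (Om m) * cm VN) :=
    cm_mul (Om m) VN ▸ isPetzRoot_cm hK2 hKcomm hKeig
  rw [hYP, cm_sub, cm_mul, cm_mul, cm_transpose]
  exact petz_factorization (cm_Om_mul_self n) (transpose_cm_Om n) (cm_Om_mul_self m)
    (transpose_cm_Om m) hVsymm hVu hVNsymm hVNu hMroot hKroot
    (by rw [hXP, cm_mul, cm_mul, cm_mul, cm_mul, cm_transpose, cm_inv, cm_inv])

/-- Given Petz data `(V, X, Y, V_N, M, K, X_P, Y_P)`, one has the factorization identity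
`Y_P + iΩ_n - i X_P Ω_m X_Pᵀ = M V [(V - iΩ_n)⁻¹ - Xᵀ (V_N - iΩ_m)⁻¹ X] V Mᵀ`
as complex `2n × 2n` matrices. -/
theorem petz_cp_factorization (n m : ℕ) (hmn : m ≤ n)
    (V M : Matrix (Fin n ⊕ Fin n) (Fin n ⊕ Fin n) ℝ)
    (X : Matrix (Fin m ⊕ Fin m) (Fin n ⊕ Fin n) ℝ)
    (Y VN K : Matrix (Fin m ⊕ Fin m) (Fin m ⊕ Fin m) ℝ)
    (XP : Matrix (Fin n ⊕ Fin n) (Fin m ⊕ Fin m) ℝ)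
    (YP : Matrix (Fin n ⊕ Fin n) (Fin n ⊕ Fin n) ℝ)
    (hV : V.IsSymm)
    (hVpd : (cm V + Complex.I • cm (Om n)).PosDef)
    (hXrank : X.rank = 2 * m)
    (hY : Y.IsSymm)
    (hYcp : (cm Y + Complex.I • cm (Om m)
        - Complex.I • (cm X * cm (Om n) * (cm X)ᵀ)).PosSemidef)
    (hVN : VN = X * V * Xᵀ + Y)
    (hM2 : M * M = 1 + ((V * Om n)⁻¹) ^ 2)
    (hMcomm : M * (V * Om n) = (V * Om n) * M)
    (hMeig : ∀ μ : ℂ, (cm M).charpoly.IsRoot μ → μ.im = 0 ∧ 0 < μ.re)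
    (hK2 : K * K = 1 + ((Om m * VN)⁻¹) ^ 2)
    (hKcomm : K * (Om m * VN) = (Om m * VN) * K)
    (hKeig : ∀ μ : ℂ, (cm K).charpoly.IsRoot μ → μ.im = 0 ∧ 0 < μ.re)
    (hXP : XP = M * V * Xᵀ * K⁻¹ * VN⁻¹)
    (hYP : YP = V - XP * VN * XPᵀ) :
    cm YP + Complex.I • cm (Om n) - Complex.I • (cm XP * cm (Om m) * (cm XP)ᵀ)
      = cm M * cm V
          * ((cm V - Complex.I • cm (Om n))⁻¹
              - (cm X)ᵀ * (cm VN - Complex.I • cm (Om m))⁻¹ * cm X)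
          * cm V * (cm M)ᵀ :=
  petz_cp_factorization_general n m V M X Y VN K XP YP hV hVpd hXrank hY hYcp hVN hM2 hMcomm hMeig
    hK2 hKcomm hKeig hXP hYP
end
end

section
/- Let X be an invertible real 2n×2n matrix such that ΩX is symmetric, let s ∈ ℝ^{2n} and a ∈ ℝ. Then the matrix exponential of the (2n+2)×(2n+2) block matrix T = [[0, sᵀΩᵀ, a], [0, X, s], [0, 0, 0]] (blocks of sizes 1, 2n, 1) is exp(T) = [[1, ((I − exp(−X))X^{-1} s)ᵀ Ωᵀ, a + sᵀ Ω (X − sinh X) X^{-2} s], [0, exp(X), (exp(X) − I)X^{-1} s], [0, 0, 1]], where sinh X := (exp(X) − exp(−X))/2. -/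
noncomputable section
open Matrix

/-- The `(2n+2) × (2n+2)` block matrix `[[0, sᵀΩᵀ, a], [0, X, s], [0, 0, 0]]`
(blocks of sizes `1`, `2n`, `1`) associated to an inhomogeneous quadratic Hamiltonian. -/
def blk {n : ℕ} (X : Matrix (Fin n ⊕ Fin n) (Fin n ⊕ Fin n) ℝ)
    (s : Fin n ⊕ Fin n → ℝ) (a : ℝ) :
    Matrix (Unit ⊕ ((Fin n ⊕ Fin n) ⊕ Unit)) (Unit ⊕ ((Fin n ⊕ Fin n) ⊕ Unit)) ℝ :=
  Matrix.of fun i j =>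
    match i, j with
    | Sum.inl _, Sum.inr (Sum.inl k) => (Om n *ᵥ s) k  -- row vector sᵀΩᵀ
    | Sum.inl _, Sum.inr (Sum.inr _) => a
    | Sum.inr (Sum.inl k), Sum.inr (Sum.inl l) => X k l
    | Sum.inr (Sum.inl k), Sum.inr (Sum.inr _) => s k
    | _, _ => 0

/-- The `(2n+2) × (2n+2)` unipotent block matrix `[[1, tᵀΩᵀ, b], [0, Y, u], [0, 0, 1]]`
(blocks of sizes `1`, `2n`, `1`). -/
def blkU {n : ℕ} (Y : Matrix (Fin n ⊕ Fin n) (Fin n ⊕ Fin n) ℝ)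
    (t u : Fin n ⊕ Fin n → ℝ) (b : ℝ) :
    Matrix (Unit ⊕ ((Fin n ⊕ Fin n) ⊕ Unit)) (Unit ⊕ ((Fin n ⊕ Fin n) ⊕ Unit)) ℝ :=
  Matrix.of fun i j =>
    match i, j with
    | Sum.inl _, Sum.inl _ => 1
    | Sum.inl _, Sum.inr (Sum.inl k) => (Om n *ᵥ t) k  -- row vector tᵀΩᵀ
    | Sum.inl _, Sum.inr (Sum.inr _) => b
    | Sum.inr (Sum.inl k), Sum.inr (Sum.inl l) => Y k l
    | Sum.inr (Sum.inl k), Sum.inr (Sum.inr _) => u k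
    | Sum.inr (Sum.inr _), Sum.inr (Sum.inr _) => 1
    | _, _ => 0

/-!
Write `T` for the block matrix and `r = Ωs`. For `k ≥ 0` the power `T ^ (k + 2)` has blocks
`X ^ (k + 2)`, `X ^ (k + 1) s`, `rᵀ X ^ (k + 1)` and corner `rᵀ X ^ k s`, so summing the exponential
series expresses `exp T` through `∑ X ^ k / (k + 2)! = (e^X - 1 - X) X⁻²`.

That `ΩX` is symmetric says that `X` is skew-adjoint for the bilinear form `Ω`, so `exp X`, `exp (-X)`
and `X⁻¹` have `Ω`-adjoints `exp (-X)`, `exp X` and `-X⁻¹`. This turns the row `rᵀ (e^X - 1) X⁻¹`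
into `((1 - e^{-X}) X⁻¹ s)ᵀ Ωᵀ`. In the corner, `-(e^X - 1 - X) = (X - sinh X) - (cosh X - 1)`, and
`(cosh X - 1) X⁻²` is `Ω`-self-adjoint, so `Ω (cosh X - 1) X⁻²` is skew-symmetric and its quadratic
form vanishes.
-/

open NormedSpace

namespace Matrix

section AdjointPair

variable {m R : Type*} [Fintype m] [CommRing R] {J A A' B B' : Matrix m m R}

theorem IsAdjointPair.one [DecidableEq m] : J.IsAdjointPair J 1 1 := by
  simp [IsAdjointPair]

theorem IsAdjointPair.neg (h : J.IsAdjointPair J A A') : J.IsAdjointPair J (-A) (-A') := by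
  simp only [IsAdjointPair, transpose_neg, neg_mul, mul_neg] at h ⊢
  rw [h]

theorem IsAdjointPair.add (hA : J.IsAdjointPair J A A') (hB : J.IsAdjointPair J B B') :
    J.IsAdjointPair J (A + B) (A' + B') := by
  simp only [IsAdjointPair, transpose_add, add_mul, mul_add] at hA hB ⊢
  rw [hA, hB]

theorem IsAdjointPair.sub (hA : J.IsAdjointPair J A A') (hB : J.IsAdjointPair J B B') :
    J.IsAdjointPair J (A - B) (A' - B') := by
  simp only [IsAdjointPair, transpose_sub, sub_mul, mul_sub] at hA hB ⊢
  rw [hA, hB]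

theorem IsAdjointPair.smul (c : R) (h : J.IsAdjointPair J A A') :
    J.IsAdjointPair J (c • A) (c • A') := by
  simp only [IsAdjointPair, transpose_smul, smul_mul_assoc, mul_smul_comm] at h ⊢
  rw [h]

theorem IsAdjointPair.mul (hA : J.IsAdjointPair J A A') (hB : J.IsAdjointPair J B B') :
    J.IsAdjointPair J (A * B) (B' * A') := by
  unfold IsAdjointPair at *
  rw [transpose_mul, Matrix.mul_assoc, hA, ← Matrix.mul_assoc, hB, Matrix.mul_assoc]

theorem IsSkewAdjoint.inv [DecidableEq m] (h : J.IsSkewAdjoint A) (hA : IsUnit A.det) :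
    J.IsSkewAdjoint A⁻¹ := by
  unfold Matrix.IsSkewAdjoint IsAdjointPair at *
  have hAt : IsUnit Aᵀ.det := by rwa [det_transpose]
  rw [transpose_nonsing_inv]
  calc (Aᵀ)⁻¹ * J = (Aᵀ)⁻¹ * (J * A) * A⁻¹ := by
        rw [← Matrix.mul_assoc, mul_nonsing_inv_cancel_right _ _ hA]
    _ = -((Aᵀ)⁻¹ * (Aᵀ * J) * A⁻¹) := by rw [h]; simp [Matrix.mul_assoc]
    _ = J * -A⁻¹ := by rw [nonsing_inv_mul_cancel_left _ _ hAt, mul_neg]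

theorem isSkewAdjoint_of_isSymm_mul (hJ : Jᵀ = -J) (h : (J * A).IsSymm) : J.IsSkewAdjoint A := by
  have h' : Aᵀ * Jᵀ = J * A := by rw [← transpose_mul]; exact h
  rw [hJ, mul_neg, neg_eq_iff_eq_neg] at h'
  rw [Matrix.IsSkewAdjoint, IsAdjointPair, h', mul_neg]

theorem IsAdjointPair.vecMul_mulVec (hJ : Jᵀ = -J) (h : J.IsAdjointPair J A A') (s : m → R) :
    (J *ᵥ s) ᵥ* A' = J *ᵥ (A *ᵥ s) := by
  rw [← vecMul_transpose J, vecMul_vecMul, mulVec_mulVec, ← vecMul_transpose, transpose_mul, hJ,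
    neg_mul, mul_neg, ← h]

theorem IsSelfAdjoint.dotProduct_mul_mulVec_eq_zero [NoZeroDivisors R] [CharZero R]
    (hJ : Jᵀ = -J) (h : J.IsSelfAdjoint A) (s : m → R) : s ⬝ᵥ ((J * A) *ᵥ s) = 0 := by
  rw [← CharZero.eq_neg_self_iff]
  conv_lhs => rw [dotProduct_mulVec, ← mulVec_transpose, dotProduct_comm]
  rw [transpose_mul, hJ, mul_neg, show Aᵀ * J = J * A from h, neg_mulVec, dotProduct_neg]

theorem commute_nonsing_inv_left [DecidableEq m] (hA : IsUnit A.det) (h : Commute A B) :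
    Commute A⁻¹ B := by
  let := A.invertibleOfIsUnitDet hA
  rw [← invOf_eq_nonsing_inv]
  exact h.invOf_left

end AdjointPair

theorem IsAdjointPair.exp {m 𝔸 : Type*} [Fintype m] [DecidableEq m] [NormedCommRing 𝔸]
    [NormedAlgebra ℚ 𝔸] [CompleteSpace 𝔸] {J A A' : Matrix m m 𝔸} (hJ : IsUnit J)
    (h : J.IsAdjointPair J A A') : J.IsAdjointPair J (exp A) (exp A') := by
  unfold IsAdjointPair at *
  have hAt : Aᵀ = J * A' * J⁻¹ := by
    rw [← h, Matrix.mul_assoc, mul_nonsing_inv _ ((isUnit_iff_isUnit_det J).mp hJ), Matrix.mul_one]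
  rw [← exp_transpose, hAt, exp_conj J A' hJ, Matrix.mul_assoc,
    nonsing_inv_mul _ ((isUnit_iff_isUnit_det J).mp hJ), Matrix.mul_one]

namespace IsSkewAdjoint

variable {m : Type*} [Fintype m] [DecidableEq m] {J X : Matrix m m ℝ}

theorem isAdjointPair_one_sub_exp_neg_mul_inv (hJ : IsUnit J) (h : J.IsSkewAdjoint X)
    (hX : IsUnit X.det) : J.IsAdjointPair J ((1 - exp (-X)) * X⁻¹) ((exp X - 1) * X⁻¹) := by
  have hexp : J.IsAdjointPair J (exp (-X)) (exp X) := by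
    simpa only [neg_neg] using IsAdjointPair.exp hJ h.neg
  convert (IsAdjointPair.one.sub hexp).mul (h.inv hX) using 1
  have hcomm : Commute X⁻¹ (exp X - 1) :=
    commute_nonsing_inv_left hX ((Commute.refl X).exp_right.sub_right (Commute.one_right X))
  rw [neg_mul, ← mul_neg, neg_sub, hcomm.eq]

theorem isSelfAdjoint_cosh_sub_one_mul_inv_sq (hJ : IsUnit J) (h : J.IsSkewAdjoint X)
    (hX : IsUnit X.det) :
    J.IsSelfAdjoint (((1 / 2 : ℝ) • (exp X + exp (-X)) - 1) * (X⁻¹ * X⁻¹)) := by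
  have hexp : J.IsAdjointPair J (exp X) (exp (-X)) := IsAdjointPair.exp hJ h
  have hexp' : J.IsAdjointPair J (exp (-X)) (exp X) := by
    simpa only [neg_neg] using IsAdjointPair.exp hJ h.neg
  change J.IsAdjointPair J _ _
  convert (((hexp.add hexp').smul (1 / 2 : ℝ)).sub IsAdjointPair.one).mul
    ((h.inv hX).mul (h.inv hX)) using 1
  have hcomm : Commute (X⁻¹ * X⁻¹) ((1 / 2 : ℝ) • (exp X + exp (-X)) - 1) := by
    have h₁ : Commute X ((1 / 2 : ℝ) • (exp X + exp (-X)) - 1) :=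
      (((Commute.refl X).exp_right.add_right (Commute.refl X).neg_right.exp_right).smul_right
        _).sub_right (Commute.one_right X)
    exact (commute_nonsing_inv_left hX h₁).mul_left (commute_nonsing_inv_left hX h₁)
  rw [neg_mul_neg, add_comm (exp (-X)), hcomm.eq]

theorem mulVec_dotProduct_exp_sub_one_sub_mul_inv_sq (hJt : Jᵀ = -J) (hJ : IsUnit J)
    (h : J.IsSkewAdjoint X) (hX : IsUnit X.det) (s : m → ℝ) :
    (J *ᵥ s) ⬝ᵥ (((exp X - 1 - X) * (X⁻¹ * X⁻¹)) *ᵥ s)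
      = s ⬝ᵥ ((J * (X - (1 / 2 : ℝ) • (exp X - exp (-X))) * (X⁻¹ * X⁻¹)) *ᵥ s) := by
  have hsplit : -(exp X - 1 - X) = (X - (1 / 2 : ℝ) • (exp X - exp (-X)))
      - ((1 / 2 : ℝ) • (exp X + exp (-X)) - 1) := by module
  have hzero :=
    (isSelfAdjoint_cosh_sub_one_mul_inv_sq hJ h hX).dotProduct_mul_mulVec_eq_zero hJt s
  rw [← vecMul_transpose, ← dotProduct_mulVec, mulVec_mulVec, hJt, neg_mul, ← mul_neg,
    ← neg_mul, hsplit, sub_mul, mul_sub, sub_mulVec, dotProduct_sub, ← Matrix.mul_assoc,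
    Matrix.mul_assoc J, hzero, sub_zero]

end IsSkewAdjoint

end Matrix

theorem hasSum_exp_sub_one_sub {𝔸 : Type*} [NormedRing 𝔸] [NormedAlgebra ℝ 𝔸] [CompleteSpace 𝔸]
    (x : 𝔸) :
    HasSum (fun k => ((Nat.factorial (k + 2) : ℝ))⁻¹ • x ^ (k + 2)) (exp x - 1 - x) := by
  simpa [Finset.sum_range_succ, sub_sub] using
    (hasSum_nat_add_iff' 2).mpr (exp_series_hasSum_exp' (𝕂 := ℝ) x)

theorem HasSum.of_mul_right_of_mul_eq_one {ι 𝔸 : Type*} [Semiring 𝔸] [TopologicalSpace 𝔸]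
    [IsTopologicalSemiring 𝔸] {f : ι → 𝔸} {x y S : 𝔸} (hxy : x * y = 1)
    (h : HasSum (fun k => f k * x) S) : HasSum f (S * y) := by
  simpa only [mul_assoc, hxy, mul_one] using h.mul_right y

section TriBlock

variable {m R : Type*}

/-- The block matrix `[[p, rᵀ, b], [0, Y, u], [0, 0, q]]`. -/
def triBlock [Zero R] (p : R) (r : m → R) (b : R) (Y : Matrix m m R) (u : m → R) (q : R) :
    Matrix (Unit ⊕ (m ⊕ Unit)) (Unit ⊕ (m ⊕ Unit)) R :=
  Matrix.of fun i j =>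
    match i, j with
    | Sum.inl _, Sum.inl _ => p
    | Sum.inl _, Sum.inr (Sum.inl l) => r l
    | Sum.inl _, Sum.inr (Sum.inr _) => b
    | Sum.inr (Sum.inl k), Sum.inr (Sum.inl l) => Y k l
    | Sum.inr (Sum.inl k), Sum.inr (Sum.inr _) => u k
    | Sum.inr (Sum.inr _), Sum.inr (Sum.inr _) => q
    | _, _ => 0

variable [CommSemiring R]

theorem triBlock_add (p p' b b' q q' : R) (r r' u u' : m → R) (Y Y' : Matrix m m R) :
    triBlock p r b Y u q + triBlock p' r' b' Y' u' q'
      = triBlock (p + p') (r + r') (b + b') (Y + Y') (u + u') (q + q') := by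
  ext (_ | _ | _) (_ | _ | _) <;> simp [triBlock]

theorem triBlock_smul (c p b q : R) (r u : m → R) (Y : Matrix m m R) :
    c • triBlock p r b Y u q = triBlock (c * p) (c • r) (c * b) (c • Y) (c • u) (c * q) := by
  ext (_ | _ | _) (_ | _ | _) <;> simp [triBlock]

theorem one_eq_triBlock [DecidableEq m] :
    (1 : Matrix (Unit ⊕ (m ⊕ Unit)) (Unit ⊕ (m ⊕ Unit)) R) = triBlock 1 0 0 1 0 1 := by
  ext (_ | _ | _) (_ | _ | _) <;> simp [triBlock, one_apply]

variable [Fintype m]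

theorem triBlock_mul (p p' b b' q q' : R) (r r' u u' : m → R) (Y Y' : Matrix m m R) :
    triBlock p r b Y u q * triBlock p' r' b' Y' u' q'
      = triBlock (p * p') (p • r' + r ᵥ* Y') (p * b' + r ⬝ᵥ u' + b * q') (Y * Y')
          (Y *ᵥ u' + q' • u) (q * q') := by
  ext (_ | _ | _) (_ | _ | _) <;>
    simp [triBlock, mul_apply, Fintype.sum_sum_type, vecMul, mulVec, dotProduct, mul_comm,
      add_assoc]

def tailBlock (r s : m → R) :
    (Matrix m m R × Matrix m m R × Matrix m m R) →ₗ[R]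
      Matrix (Unit ⊕ (m ⊕ Unit)) (Unit ⊕ (m ⊕ Unit)) R where
  toFun A := triBlock 0 (r ᵥ* A.2.1) (r ⬝ᵥ (A.1 *ᵥ s)) A.2.2 (A.2.1 *ᵥ s) 0
  map_add' A B := by
    simp only [triBlock_add, Prod.fst_add, Prod.snd_add, vecMul_add, add_mulVec, dotProduct_add,
      add_zero]
  map_smul' c A := by
    simp only [triBlock_smul, Prod.smul_fst, Prod.smul_snd, vecMul_smul, smul_mulVec,
      dotProduct_smul, smul_eq_mul, mul_zero, RingHom.id_apply]

theorem triBlock_pow_add_two [DecidableEq m] (r s : m → R) (a : R) (X : Matrix m m R) (k : ℕ) :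
    triBlock 0 r a X s 0 ^ (k + 2) = tailBlock r s (X ^ k, X ^ (k + 1), X ^ (k + 2)) := by
  induction k with
  | zero => simp [sq, tailBlock, triBlock_mul]
  | succ k ih =>
    rw [pow_succ' _ (k + 2), ih]
    simp [tailBlock, triBlock_mul, pow_succ' X (k + 2), pow_succ' X (k + 1), mulVec_mulVec]

end TriBlock

theorem exp_triBlock {m : Type*} [Fintype m] [DecidableEq m] (r s : m → ℝ) (a : ℝ)
    {X : Matrix m m ℝ} (hX : IsUnit X.det) :
    exp (triBlock 0 r a X s 0)
      = triBlock 1 (r ᵥ* ((exp X - 1) * X⁻¹)) (a + r ⬝ᵥ (((exp X - 1 - X) * (X⁻¹ * X⁻¹)) *ᵥ s))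
          (exp X) (((exp X - 1) * X⁻¹) *ᵥ s) 1 := by
  set c : ℕ → ℝ := fun k => ((Nat.factorial (k + 2) : ℝ))⁻¹
  set S := exp X - 1 - X
  have hS₂ : HasSum (fun k => c k • X ^ (k + 2)) S := by
    open scoped Matrix.Norms.Operator in exact hasSum_exp_sub_one_sub X
  have hS₁ : HasSum (fun k => c k • X ^ (k + 1)) (S * X⁻¹) :=
    HasSum.of_mul_right_of_mul_eq_one (mul_nonsing_inv X hX)
      (by simpa only [smul_mul_assoc, ← pow_succ] using hS₂)
  have hS₀ : HasSum (fun k => c k • X ^ k) (S * X⁻¹ * X⁻¹) :=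
    HasSum.of_mul_right_of_mul_eq_one (mul_nonsing_inv X hX)
      (by simpa only [smul_mul_assoc, ← pow_succ] using hS₁)
  have hT : HasSum (fun k => c k • triBlock 0 r a X s 0 ^ (k + 2))
      (tailBlock r s (S * X⁻¹ * X⁻¹, S * X⁻¹, S)) := by
    convert (hS₀.prodMk (hS₁.prodMk hS₂)).map (tailBlock r s)
      (LinearMap.continuous_of_finiteDimensional _) using 2 with k
    rw [triBlock_pow_add_two, ← map_smul, Function.comp_apply, Prod.smul_mk, Prod.smul_mk]
  have hexp : HasSum (fun k => c k • triBlock 0 r a X s 0 ^ (k + 2))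
      (exp (triBlock 0 r a X s 0) - 1 - triBlock 0 r a X s 0) := by
    open scoped Matrix.Norms.Operator in exact hasSum_exp_sub_one_sub _
  have hE : (exp X - 1) * X⁻¹ = S * X⁻¹ + 1 := by
    rw [sub_mul (exp X - 1), mul_nonsing_inv _ hX, sub_add_cancel]
  have hexp_eq := hexp.unique hT
  rw [sub_sub, sub_eq_iff_eq_add'] at hexp_eq
  rw [hexp_eq, one_eq_triBlock, tailBlock, LinearMap.coe_mk, AddHom.coe_mk, triBlock_add,
    triBlock_add, hE]
  congr 1 <;> simp only [zero_add, add_zero]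
  · rw [vecMul_add, vecMul_one, add_comm]
  · rw [Matrix.mul_assoc]
  · simp only [S]; abel
  · rw [add_mulVec, one_mulVec, add_comm]

theorem Om_eq_neg_J (n : ℕ) : Om n = -J (Fin n) ℝ := by
  simp [Om, J, fromBlocks_neg]

theorem Om_transpose (n : ℕ) : (Om n)ᵀ = -Om n := by
  rw [Om_eq_neg_J, transpose_neg, J_transpose]

theorem isUnit_Om (n : ℕ) : IsUnit (Om n) := by
  rw [Om_eq_neg_J]
  exact ((isUnit_iff_isUnit_det _).mpr (isUnit_det_J _ _)).neg

section Blocks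

variable {n : ℕ}

theorem blk_eq_triBlock (X : Matrix (Fin n ⊕ Fin n) (Fin n ⊕ Fin n) ℝ) (s : Fin n ⊕ Fin n → ℝ)
    (a : ℝ) : blk X s a = triBlock 0 (Om n *ᵥ s) a X s 0 := by
  ext (_ | _ | _) (_ | _ | _) <;> rfl

theorem blkU_eq_triBlock (Y : Matrix (Fin n ⊕ Fin n) (Fin n ⊕ Fin n) ℝ)
    (t u : Fin n ⊕ Fin n → ℝ) (b : ℝ) : blkU Y t u b = triBlock 1 (Om n *ᵥ t) b Y u 1 := by
  ext (_ | _ | _) (_ | _ | _) <;> rfl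

end Blocks

/-- For invertible `X` with `ΩX` symmetric, `s ∈ ℝ^{2n}`, `a ∈ ℝ`, the matrix exponential of
`[[0, sᵀΩᵀ, a], [0, X, s], [0, 0, 0]]` equals
`[[1, ((I - e^{-X})X⁻¹s)ᵀΩᵀ, a + sᵀΩ(X - sinh X)X⁻²s], [0, e^X, (e^X - I)X⁻¹s], [0, 0, 1]]`,
where `sinh X = (e^X - e^{-X})/2`. -/
theorem exp_blk (n : ℕ)
    (X : Matrix (Fin n ⊕ Fin n) (Fin n ⊕ Fin n) ℝ)
    (s : Fin n ⊕ Fin n → ℝ) (a : ℝ)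
    (hX : IsUnit X.det) (hsym : (Om n * X).IsSymm) :
    NormedSpace.exp (blk X s a)
      = blkU (NormedSpace.exp X)
          (((1 - NormedSpace.exp (-X)) * X⁻¹) *ᵥ s)
          (((NormedSpace.exp X - 1) * X⁻¹) *ᵥ s)
          (a + s ⬝ᵥ ((Om n
              * (X - (1 / 2 : ℝ) • (NormedSpace.exp X - NormedSpace.exp (-X)))
              * (X⁻¹ * X⁻¹)) *ᵥ s)) := by
  have hskew : (Om n).IsSkewAdjoint X := isSkewAdjoint_of_isSymm_mul (Om_transpose n) hsym
  rw [blk_eq_triBlock, exp_triBlock _ _ _ hX, blkU_eq_triBlock,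
    (hskew.isAdjointPair_one_sub_exp_neg_mul_inv (isUnit_Om n) hX).vecMul_mulVec (Om_transpose n),
    hskew.mulVec_dotProduct_exp_sub_one_sub_mul_inv_sq (Om_transpose n) (isUnit_Om n) hX]
end
end
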